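/- arXiv:1705.08574 — 4 statements merged into one kernel-verified Lean document; each statement's English description precedes it below -/
import Mathlib

section
/- For all x, y in the unit ball 𝔹ⁿ, ρ_{𝔹ⁿ}(x,y) − 2·log 2 ≤ u_{𝔹ⁿ}(x,y) ≤ 2·ρ_{𝔹ⁿ}(x,y) + 2·log 2; that is, the identity map is a quasi-isometry between (𝔹ⁿ, ρ) and (𝔹ⁿ, u). -/
/-!
Write `a = 1 - ‖x‖`, `b = 1 - ‖y‖`, `d = ‖x - y‖` and `s = sinh (ρ/2) = d / √((1-‖x‖²)(1-‖y‖²))`.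
As `1 - ‖x‖²` lies between `a` and `2a`, the quantity `t = d / √(ab)` satisfies `s ≤ t ≤ 2s`.
From `√(ab) ≤ max a b ≤ min a b + |a - b| ≤ √(ab) + d`, the number `q = exp (u/2)` satisfies
`1 + t ≤ q ≤ 1 + 2t`, so `1 + sinh (ρ/2) ≤ q ≤ 1 + 4 sinh (ρ/2)`. The elementary bounds
`1 + sinh r ≤ exp r ≤ 1 + 2 sinh r` for `r ≥ 0` turn these into the two estimates.
-/

open Metric Real

namespace Real

lemma one_add_sinh_le_exp (r : ℝ) : 1 + sinh r ≤ exp r := by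
  rw [← sinh_add_cosh]
  linarith [one_le_cosh r]

lemma exp_le_one_add_two_mul_sinh {r : ℝ} (hr : 0 ≤ r) : exp r ≤ 1 + 2 * sinh r := by
  have hcosh : cosh r = sinh r + exp (-r) := by rw [← cosh_sub_sinh]; ring
  have hexp : exp (-r) ≤ 1 := exp_le_one_iff.mpr (neg_nonpos.mpr hr)
  rw [← sinh_add_cosh]
  linarith

lemma sub_log_two_le_log_of_one_add_sinh_le {r q : ℝ} (hr : 0 ≤ r) (hq : 1 + sinh r ≤ q) :
    r - log 2 ≤ log q := by
  have hsinh : 0 ≤ sinh r := sinh_nonneg_iff.mpr hr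
  rw [le_log_iff_exp_le (by linarith), exp_sub, exp_log two_pos]
  linarith [exp_le_one_add_two_mul_sinh hr]

lemma log_le_two_mul_add_log_two_of_le_one_add_four_mul_sinh {r q : ℝ} (hr : 0 ≤ r) (hq₀ : 0 < q)
    (hq : q ≤ 1 + 4 * sinh r) : log q ≤ 2 * r + log 2 := by
  have hsinh : 0 ≤ sinh r := sinh_nonneg_iff.mpr hr
  have hexp : 1 + sinh r ≤ exp r := one_add_sinh_le_exp r
  rw [log_le_iff_le_exp hq₀, exp_add, exp_log two_pos, two_mul, exp_add]
  nlinarith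

lemma min_le_sqrt_mul {a b : ℝ} (ha : 0 ≤ a) (hb : 0 ≤ b) : min a b ≤ √(a * b) :=
  (le_sqrt (le_min ha hb) (mul_nonneg ha hb)).mpr <|
    sq (min a b) ▸ mul_le_mul (min_le_left a b) (min_le_right a b) (le_min ha hb) ha

lemma sqrt_mul_le_max {a b : ℝ} (ha : 0 ≤ a) (hb : 0 ≤ b) : √(a * b) ≤ max a b :=
  (sqrt_le_left (ha.trans (le_max_left a b))).mpr <|
    sq (max a b) ▸ mul_le_mul (le_max_left a b) (le_max_right a b) hb (ha.trans (le_max_left a b))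

end Real

lemma one_add_div_sqrt_mul_le {a b d : ℝ} (ha : 0 < a) (hb : 0 < b) :
    1 + d / √(a * b) ≤ (d + max a b) / √(a * b) := by
  have hab : 0 < √(a * b) := sqrt_pos.mpr (mul_pos ha hb)
  rw [one_add_div hab.ne', add_comm]
  gcongr
  exact sqrt_mul_le_max ha.le hb.le

lemma div_sqrt_mul_le_one_add_two_mul {a b d : ℝ} (ha : 0 < a) (hb : 0 < b) (hd : |a - b| ≤ d) :
    (d + max a b) / √(a * b) ≤ 1 + 2 * (d / √(a * b)) := by
  have hab : 0 < √(a * b) := sqrt_pos.mpr (mul_pos ha hb)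
  have hmax : max a b ≤ √(a * b) + d := by
    linarith [max_sub_min_eq_abs' a b, min_le_sqrt_mul ha.le hb.le]
  rw [div_le_iff₀ hab]
  field_simp
  linarith

lemma one_sub_le_one_sub_sq {r : ℝ} (hr₀ : 0 ≤ r) (hr₁ : r ≤ 1) : 1 - r ≤ 1 - r ^ 2 := by
  nlinarith

lemma one_sub_sq_le_two_mul_one_sub (r : ℝ) : 1 - r ^ 2 ≤ 2 * (1 - r) := by
  nlinarith [sq_nonneg (1 - r)]

lemma div_sqrt_one_sub_sq_le_div_sqrt_one_sub {r r' d : ℝ} (hr₀ : 0 ≤ r) (hr₁ : r < 1)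
    (hr'₀ : 0 ≤ r') (hr'₁ : r' < 1) (hd : 0 ≤ d) :
    d / √((1 - r ^ 2) * (1 - r' ^ 2)) ≤ d / √((1 - r) * (1 - r')) := by
  have hpos : 0 < (1 - r) * (1 - r') := mul_pos (by linarith) (by linarith)
  refine div_le_div_of_nonneg_left hd (sqrt_pos.mpr hpos) (sqrt_le_sqrt ?_)
  exact mul_le_mul (one_sub_le_one_sub_sq hr₀ hr₁.le) (one_sub_le_one_sub_sq hr'₀ hr'₁.le)
    (by linarith) (by nlinarith)

lemma div_sqrt_one_sub_le_two_mul_div_sqrt_one_sub_sq {r r' d : ℝ} (hr₀ : 0 ≤ r) (hr₁ : r < 1)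
    (hr'₀ : 0 ≤ r') (hr'₁ : r' < 1) (hd : 0 ≤ d) :
    d / √((1 - r) * (1 - r')) ≤ 2 * (d / √((1 - r ^ 2) * (1 - r' ^ 2))) := by
  have hpos : 0 < (1 - r ^ 2) * (1 - r' ^ 2) := mul_pos (by nlinarith) (by nlinarith)
  have hsqrt : √((1 - r ^ 2) * (1 - r' ^ 2)) ≤ 2 * √((1 - r) * (1 - r')) := by
    rw [show (2 : ℝ) = √(2 * 2) by simp [sqrt_mul_self], ← sqrt_mul (by norm_num)]
    apply sqrt_le_sqrt
    rw [mul_mul_mul_comm]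
    exact mul_le_mul (one_sub_sq_le_two_mul_one_sub r) (one_sub_sq_le_two_mul_one_sub r')
      (by nlinarith) (by linarith)
  rw [← mul_div_mul_left d _ two_ne_zero, mul_div_assoc']
  gcongr

/-- For `x, y` in the unit ball, `ρ(x,y) − 2 log 2 ≤ u(x,y) ≤ 2 ρ(x,y) + 2 log 2`,
where `ρ` is the hyperbolic metric of the unit ball and
`u(x,y) = 2·log((|x−y| + max{1−|x|,1−|y|})/√((1−|x|)(1−|y|)))`. -/
theorem stmt3 {n : ℕ} (ρ u : EuclideanSpace ℝ (Fin n) → EuclideanSpace ℝ (Fin n) → ℝ)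
    (hρ : ∀ x ∈ Metric.ball (0 : EuclideanSpace ℝ (Fin n)) 1, ∀ y ∈ Metric.ball (0 : EuclideanSpace ℝ (Fin n)) 1,
      Real.sinh (ρ x y / 2) = dist x y / Real.sqrt ((1 - ‖x‖^2) * (1 - ‖y‖^2)))
    (hu : u = fun x y => 2 * Real.log ((dist x y + max (1 - ‖x‖) (1 - ‖y‖)) / Real.sqrt ((1 - ‖x‖) * (1 - ‖y‖))))
    (x y : EuclideanSpace ℝ (Fin n))
    (hx : x ∈ Metric.ball (0 : EuclideanSpace ℝ (Fin n)) 1)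
    (hy : y ∈ Metric.ball (0 : EuclideanSpace ℝ (Fin n)) 1) :
    ρ x y - 2 * Real.log 2 ≤ u x y ∧ u x y ≤ 2 * ρ x y + 2 * Real.log 2 := by
  subst hu
  have hx₁ : ‖x‖ < 1 := mem_ball_zero_iff.mp hx
  have hy₁ : ‖y‖ < 1 := mem_ball_zero_iff.mp hy
  have hd : |(1 - ‖x‖) - (1 - ‖y‖)| ≤ dist x y := by
    simpa [abs_sub_comm, dist_eq_norm] using abs_norm_sub_norm_le x y
  have hr : 0 ≤ ρ x y / 2 := sinh_nonneg_iff.mp (hρ x hx y hy ▸ by positivity)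
  have hst := div_sqrt_one_sub_sq_le_div_sqrt_one_sub (norm_nonneg x) hx₁ (norm_nonneg y) hy₁
    (dist_nonneg (x := x) (y := y))
  have hts := div_sqrt_one_sub_le_two_mul_div_sqrt_one_sub_sq (norm_nonneg x) hx₁ (norm_nonneg y)
    hy₁ (dist_nonneg (x := x) (y := y))
  have hq_lower := one_add_div_sqrt_mul_le (d := dist x y) (sub_pos.mpr hx₁) (sub_pos.mpr hy₁)
  have hq_upper := div_sqrt_mul_le_one_add_two_mul (sub_pos.mpr hx₁) (sub_pos.mpr hy₁) hd
  rw [← hρ x hx y hy] at hst hts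
  constructor
  · linarith [sub_log_two_le_log_of_one_add_sinh_le hr (hq_lower.trans' (by linarith))]
  · have hq₀ : 0 < (dist x y + max (1 - ‖x‖) (1 - ‖y‖)) / √((1 - ‖x‖) * (1 - ‖y‖)) :=
      hq_lower.trans_lt' (by positivity)
    linarith [log_le_two_mul_add_log_two_of_le_one_add_four_mul_sinh hr hq₀ (by linarith)]
end

section
/- For any domain D ⊊ ℝⁿ with nonempty boundary and x, y ∈ D, 2·τ̃_D(x,y) ≤ u_D(x,y). -/
/-!
Every boundary point `p` satisfies `|x - p| ≥ d(x)` and `|p - y| ≥ d(y)`, so the supremum in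
`τ̃_D(x, y)` is at most `|x - y| / √(d(x) d(y))`; and `1 ≤ max{d(x), d(y)} / √(d(x) d(y))`
because a geometric mean is at most the maximum.
-/

open Metric Real

lemma Real.sqrt_mul_le_max_s6 {a b : ℝ} (ha : 0 ≤ a) (hb : 0 ≤ b) : √(a * b) ≤ max a b := by
  rw [sqrt_le_left (ha.trans (le_max_left a b)), sq]
  exact mul_le_mul (le_max_left a b) (le_max_right a b) hb (ha.trans (le_max_left a b))

section InfDist

variable {α : Type*} [PseudoMetricSpace α] {s : Set α} {x y : α}

lemma Metric.infDist_mul_infDist_le_dist_mul_dist {p : α} (hp : p ∈ s) :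
    infDist x s * infDist y s ≤ dist x p * dist p y :=
  mul_le_mul (infDist_le_dist_of_mem hp) (dist_comm p y ▸ infDist_le_dist_of_mem hp)
    infDist_nonneg dist_nonneg

lemma iSup_dist_div_sqrt_dist_mul_dist_le (hx : 0 < infDist x s) (hy : 0 < infDist y s) :
    ⨆ p : s, dist x y / √(dist x p * dist (p : α) y) ≤
      dist x y / √(infDist x s * infDist y s) := by
  have hsqrt : 0 < √(infDist x s * infDist y s) := sqrt_pos.2 (mul_pos hx hy)
  refine Real.iSup_le (fun p => ?_) (by positivity)
  exact div_le_div_of_nonneg_left dist_nonneg hsqrt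
    (sqrt_le_sqrt (infDist_mul_infDist_le_dist_mul_dist p.2))

lemma one_add_iSup_dist_div_sqrt_dist_mul_dist_le (hx : 0 < infDist x s)
    (hy : 0 < infDist y s) :
    1 + ⨆ p : s, dist x y / √(dist x p * dist (p : α) y) ≤
      (dist x y + max (infDist x s) (infDist y s)) / √(infDist x s * infDist y s) := by
  have hsqrt : 0 < √(infDist x s * infDist y s) := sqrt_pos.2 (mul_pos hx hy)
  have hone : 1 ≤ max (infDist x s) (infDist y s) / √(infDist x s * infDist y s) :=
    (one_le_div hsqrt).2 (Real.sqrt_mul_le_max_s6 hx.le hy.le)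
  rw [add_div, add_comm]
  exact add_le_add (iSup_dist_div_sqrt_dist_mul_dist_le hx hy) hone

end InfDist

theorem stmt6_general {n : ℕ} (D : Set (EuclideanSpace ℝ (Fin n)))
    (hDopen : IsOpen D)
    (hbd : (frontier D).Nonempty)
    (d tau u : _)
    (hd : d = fun x => Metric.infDist x (frontier D))
    (htau : tau = fun x y => Real.log (1 + ⨆ p : frontier D,
      dist x y / Real.sqrt (dist x (p : EuclideanSpace ℝ (Fin n)) * dist (p : EuclideanSpace ℝ (Fin n)) y)))
    (hu : u = fun x y => 2 * Real.log ((dist x y + max (d x) (d y)) / Real.sqrt (d x * d y)))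
    (x y : EuclideanSpace ℝ (Fin n)) (hx : x ∈ D) (hy : y ∈ D) :
    2 * tau x y ≤ u x y := by
  subst hd htau hu
  have hpos : ∀ z ∈ D, 0 < infDist z (frontier D) := fun z hz =>
    (isClosed_frontier.notMem_iff_infDist_pos hbd).1 fun hzf => (hDopen.frontier_eq ▸ hzf).2 hz
  have hsup : 0 ≤ ⨆ p : frontier D, dist x y / √(dist x p * dist (p : EuclideanSpace ℝ (Fin n)) y) :=
    Real.iSup_nonneg fun _ => by positivity
  dsimp only
  gcongr
  exact one_add_iSup_dist_div_sqrt_dist_mul_dist_le (hpos x hx) (hpos y hy)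

/-- For a domain `D ⊊ ℝⁿ` with nonempty boundary,
`τ̃_D(x,y) = log(1 + sup_{p ∈ ∂D} |x−y|/√(|x−p||p−y|))` and
`u_D(x,y) = 2·log((|x−y| + max{d(x),d(y)})/√(d(x)d(y)))` satisfy `2 τ̃_D ≤ u_D`. -/
theorem stmt6 {n : ℕ} (D : Set (EuclideanSpace ℝ (Fin n)))
    (hDopen : IsOpen D) (hDconn : IsConnected D) (hDproper : D ≠ Set.univ)
    (hbd : (frontier D).Nonempty)
    (d tau u : _)
    (hd : d = fun x => Metric.infDist x (frontier D))
    (htau : tau = fun x y => Real.log (1 + ⨆ p : frontier D,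
      dist x y / Real.sqrt (dist x (p : EuclideanSpace ℝ (Fin n)) * dist (p : EuclideanSpace ℝ (Fin n)) y)))
    (hu : u = fun x y => 2 * Real.log ((dist x y + max (d x) (d y)) / Real.sqrt (d x * d y)))
    (x y : EuclideanSpace ℝ (Fin n)) (hx : x ∈ D) (hy : y ∈ D) :
    2 * tau x y ≤ u x y :=
  stmt6_general D hDopen hbd d tau u hd htau hu x y hx hy
end

section
/- For any domain D ⊊ ℝⁿ and x, y ∈ D, j̃_D(x,y) ≤ u_D(x,y) ≤ 4·j̃_D(x,y), and the first inequality is sharp. -/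
open Metric Real

/-- Distance to the boundary. -/
noncomputable def bdist {n : ℕ} (D : Set (EuclideanSpace ℝ (Fin n)))
    (x : EuclideanSpace ℝ (Fin n)) : ℝ :=
  Metric.infDist x (frontier D)

/-- The distance ratio metric `j̃_D(x,y) = log(1 + |x−y|/min{d(x),d(y)})`. -/
noncomputable def jtil {n : ℕ} (D : Set (EuclideanSpace ℝ (Fin n)))
    (x y : EuclideanSpace ℝ (Fin n)) : ℝ :=
  Real.log (1 + dist x y / min (bdist D x) (bdist D y))

/-- Ibragimov's metric `u_D(x,y) = 2 log((|x−y| + max{d(x),d(y)})/√(d(x)d(y)))`. -/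
noncomputable def uu {n : ℕ} (D : Set (EuclideanSpace ℝ (Fin n)))
    (x y : EuclideanSpace ℝ (Fin n)) : ℝ :=
  2 * Real.log ((dist x y + max (bdist D x) (bdist D y)) / Real.sqrt (bdist D x * bdist D y))

/-!
Write `m ≤ M` for the two boundary distances and `r = |x - y|`. Then `j̃ = log ((m + r) / m)` and
`u = log ((r + M)² / (m M))`, so the first inequality reduces to `(m + r) M ≤ (r + M)²`. Since the
boundary distance is 1-Lipschitz, `M ≤ m + r`, whence
`(r + M)² / (m M) ≤ (1 + 2 r / m)² ≤ (1 + r / m)⁴`, the second inequality.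
For sharpness, in the punctured plane at the points `e` and `t e` (`‖e‖ = 1`, `t > 1`) one finds
`j̃ = log t` and `u = log ((2t - 1)² / t) = log t + O(1)`.
-/

lemma two_mul_log_div_sqrt {A p : ℝ} (hp : 0 ≤ p) :
    2 * log (A / √p) = log (A ^ 2 / p) := by
  rw [show A ^ 2 / p = (A / √p) ^ 2 by rw [div_pow, sq_sqrt hp], log_pow]
  norm_num

lemma log_one_add_div_le_two_mul_log_div_sqrt {m M r : ℝ} (hm : 0 < m) (hmM : m ≤ M)
    (hr : 0 ≤ r) : log (1 + r / m) ≤ 2 * log ((r + M) / √(m * M)) := by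
  have hM : 0 < M := hm.trans_le hmM
  rw [two_mul_log_div_sqrt (by positivity)]
  refine log_le_log (by positivity) ?_
  calc 1 + r / m = (m + r) * M / (m * M) := by field_simp
    _ ≤ (r + M) ^ 2 / (m * M) := by gcongr; nlinarith

lemma two_mul_log_div_sqrt_le_four_mul_log_one_add_div {m M r : ℝ} (hm : 0 < m) (hmM : m ≤ M)
    (hr : 0 ≤ r) (hMr : M ≤ m + r) : 2 * log ((r + M) / √(m * M)) ≤ 4 * log (1 + r / m) := by
  have hM : 0 < M := hm.trans_le hmM
  rw [two_mul_log_div_sqrt (by positivity), show (4 : ℝ) = (4 : ℕ) by norm_num, ← log_pow]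
  refine log_le_log (by positivity) ?_
  calc (r + M) ^ 2 / (m * M) ≤ (m + 2 * r) ^ 2 / (m * m) := by
        gcongr ?_ ^ 2 / (m * ?_); linarith
    _ = (1 + 2 * (r / m)) ^ 2 := by field_simp
    _ ≤ ((1 + r / m) ^ 2) ^ 2 := by gcongr; nlinarith [sq_nonneg (r / m)]
    _ = (1 + r / m) ^ 4 := by ring

lemma exists_log_sq_div_lt {ε : ℝ} (hε : 0 < ε) :
    ∃ t > 1, 0 < log ((2 * t - 1) ^ 2 / t) ∧ log ((2 * t - 1) ^ 2 / t) < (1 + ε) * log t := by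
  set t := exp (2 / ε)
  have ht : 1 < t := one_lt_exp_iff.2 (by positivity)
  have hlog4 : log 4 < 2 := by
    rw [show (4 : ℝ) = 2 * 2 by norm_num, log_mul two_ne_zero two_ne_zero]
    linarith [log_two_lt_d9]
  refine ⟨t, ht, log_pos ?_, ?_⟩
  · rw [one_lt_div (by positivity)]
    nlinarith
  calc log ((2 * t - 1) ^ 2 / t) < log (4 * t) := by
        refine log_lt_log (div_pos (by nlinarith) (by positivity)) ?_
        rw [div_lt_iff₀ (by positivity)]
        nlinarith
    _ = log 4 + 2 / ε := by rw [log_mul four_ne_zero (by positivity), log_exp]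
    _ < 2 + 2 / ε := by linarith
    _ = (1 + ε) * log t := by
        rw [log_exp]
        field_simp
        ring

section

variable {n : ℕ} {D : Set (EuclideanSpace ℝ (Fin n))} {x y : EuclideanSpace ℝ (Fin n)}

lemma bdist_pos (hD : IsOpen D) (hD' : D ≠ Set.univ) (hx : x ∈ D) : 0 < bdist D x := by
  have hfr : (frontier D).Nonempty := nonempty_frontier_iff.mpr ⟨⟨x, hx⟩, hD'⟩
  refine (isClosed_frontier.notMem_iff_infDist_pos hfr).mp fun hx' => ?_
  exact hD.inter_frontier_eq.subset ⟨hx, hx'⟩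

lemma abs_bdist_sub_bdist_le (D : Set (EuclideanSpace ℝ (Fin n)))
    (x y : EuclideanSpace ℝ (Fin n)) : |bdist D x - bdist D y| ≤ dist x y := by
  simpa [bdist, Real.dist_eq] using (lipschitz_infDist_pt (frontier D)).dist_le_mul x y

lemma jtil_le_uu (hD : IsOpen D) (hD' : D ≠ Set.univ) (hx : x ∈ D) (hy : y ∈ D) :
    jtil D x y ≤ uu D x y := by
  rw [jtil, uu, ← min_mul_max (bdist D x)]
  exact log_one_add_div_le_two_mul_log_div_sqrt
    (lt_min (bdist_pos hD hD' hx) (bdist_pos hD hD' hy)) min_le_max dist_nonneg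

lemma uu_le_four_mul_jtil (hD : IsOpen D) (hD' : D ≠ Set.univ) (hx : x ∈ D) (hy : y ∈ D) :
    uu D x y ≤ 4 * jtil D x y := by
  have hmax : max (bdist D x) (bdist D y) ≤ min (bdist D x) (bdist D y) + dist x y := by
    have := abs_bdist_sub_bdist_le D y x
    rw [← max_sub_min_eq_abs, dist_comm] at this
    linarith
  rw [jtil, uu, ← min_mul_max (bdist D x)]
  exact two_mul_log_div_sqrt_le_four_mul_log_one_add_div
    (lt_min (bdist_pos hD hD' hx) (bdist_pos hD hD' hy)) min_le_max dist_nonneg hmax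

end

lemma dist_self_smul_of_norm_eq_one {E : Type*} [NormedAddCommGroup E] [NormedSpace ℝ E] {e : E}
    {t : ℝ} (he : ‖e‖ = 1) (ht : 1 ≤ t) : dist e (t • e) = t - 1 := by
  rw [dist_comm, dist_eq_norm, show t • e - e = (t - 1) • e by rw [sub_smul, one_smul],
    norm_smul, he, mul_one, norm_of_nonneg (by linarith)]

section

variable {n : ℕ} [NeZero n] {e : EuclideanSpace ℝ (Fin n)} {t : ℝ}

lemma bdist_compl_singleton (a x : EuclideanSpace ℝ (Fin n)) : bdist {a}ᶜ x = dist x a := by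
  rw [bdist, frontier_compl, ← closedBall_zero, frontier_closedBall', sphere_zero,
    infDist_singleton]

lemma bdist_compl_zero_smul (he : ‖e‖ = 1) (ht : 0 ≤ t) : bdist {0}ᶜ (t • e) = t := by
  rw [bdist_compl_singleton, dist_zero_right, norm_smul, he, mul_one, norm_of_nonneg ht]

lemma bdist_compl_zero (he : ‖e‖ = 1) : bdist {0}ᶜ e = 1 := by
  simpa using bdist_compl_zero_smul he zero_le_one

lemma jtil_compl_zero_smul (he : ‖e‖ = 1) (ht : 1 ≤ t) : jtil {0}ᶜ e (t • e) = log t := by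
  rw [jtil, bdist_compl_zero he, bdist_compl_zero_smul he (by linarith),
    dist_self_smul_of_norm_eq_one he ht, min_eq_left ht]
  ring_nf

lemma uu_compl_zero_smul (he : ‖e‖ = 1) (ht : 1 ≤ t) :
    uu {0}ᶜ e (t • e) = log ((2 * t - 1) ^ 2 / t) := by
  rw [uu, bdist_compl_zero he, bdist_compl_zero_smul he (by linarith),
    dist_self_smul_of_norm_eq_one he ht, max_eq_right ht, one_mul,
    two_mul_log_div_sqrt (by linarith)]
  ring_nf

end

theorem stmt12_general {n : ℕ} (D : Set (EuclideanSpace ℝ (Fin n)))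
    (hDopen : IsOpen D) (hDproper : D ≠ Set.univ)
    (x y : EuclideanSpace ℝ (Fin n)) (hx : x ∈ D) (hy : y ∈ D) :
    (jtil D x y ≤ uu D x y ∧ uu D x y ≤ 4 * jtil D x y) ∧
    (∀ ε > 0, ∃ (m : ℕ) (D' : Set (EuclideanSpace ℝ (Fin m))),
      IsOpen D' ∧ IsConnected D' ∧ D' ≠ Set.univ ∧
      ∃ x' ∈ D', ∃ y' ∈ D', 0 < uu D' x' y' ∧ uu D' x' y' < (1 + ε) * jtil D' x' y') := by
  refine ⟨⟨jtil_le_uu hDopen hDproper hx hy, uu_le_four_mul_jtil hDopen hDproper hx hy⟩,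
    fun ε hε => ?_⟩
  obtain ⟨t, ht, hpos, hlt⟩ := exists_log_sq_div_lt hε
  obtain ⟨e, he⟩ := exists_norm_eq (EuclideanSpace ℝ (Fin 2)) zero_le_one
  have he0 : e ≠ 0 := norm_ne_zero_iff.1 (he ▸ one_ne_zero)
  have hrank : 1 < Module.rank ℝ (EuclideanSpace ℝ (Fin 2)) := by
    rw [← Module.finrank_eq_rank, finrank_euclideanSpace_fin]
    norm_num
  refine ⟨2, {0}ᶜ, isOpen_compl_singleton, isConnected_compl_singleton_of_one_lt_rank hrank 0,
    Set.compl_ne_univ.2 (Set.singleton_nonempty 0), e, he0, t • e, smul_ne_zero (by linarith) he0,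
    ?_⟩
  rw [uu_compl_zero_smul he ht.le, jtil_compl_zero_smul he ht.le]
  exact ⟨hpos, hlt⟩

/-- For any proper subdomain `D ⊊ ℝⁿ` and `x, y ∈ D`,
`j̃_D(x,y) ≤ u_D(x,y) ≤ 4 j̃_D(x,y)`, and the first inequality is sharp:
the constant `1` cannot be increased, over all domains (in all dimensions). -/
theorem stmt12 {n : ℕ} (D : Set (EuclideanSpace ℝ (Fin n)))
    (hDopen : IsOpen D) (hDconn : IsConnected D) (hDproper : D ≠ Set.univ)
    (x y : EuclideanSpace ℝ (Fin n)) (hx : x ∈ D) (hy : y ∈ D) :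
    (jtil D x y ≤ uu D x y ∧ uu D x y ≤ 4 * jtil D x y) ∧
    (∀ ε > 0, ∃ (m : ℕ) (D' : Set (EuclideanSpace ℝ (Fin m))),
      IsOpen D' ∧ IsConnected D' ∧ D' ≠ Set.univ ∧
      ∃ x' ∈ D', ∃ y' ∈ D', 0 < uu D' x' y' ∧ uu D' x' y' < (1 + ε) * jtil D' x' y') :=
  stmt12_general D hDopen hDproper x y hx hy
end

section
/- For any domain D ⊊ ℝⁿ and x, y ∈ D, τ̃_D(x,y) ≥ (log 3)·s_D(x,y), and equality holds when D = ℝⁿ \ {0} and y = −x. -/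
open Metric Real

/-!
Fix a boundary point `p` and write `a = |x - p|`, `b = |p - y|`, `t = |x - y| / (a + b)`, so that
`0 ≤ t ≤ 1` by the triangle inequality. AM–GM gives `|x - y| / √(ab) ≥ 2t`, and concavity of
`log` on `[1, 3]` gives `log (1 + 2t) ≥ t log 3`; taking the supremum over `p` proves the
inequality. For `D = ℝⁿ ∖ {0}` the only boundary point is `0`, and at `y = -x` both bounds are
attained: `t = 1` and `|x - y| / √(ab) = 2`.
-/

section RatioSup

variable {X : Type*} [PseudoMetricSpace X]

/-- The supremum in the triangular ratio metric `s` of the complement of `F`. -/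
noncomputable def triangularRatio (F : Set X) (x y : X) : ℝ :=
  ⨆ p : F, dist x y / (dist x p + dist (p : X) y)

/-- The supremum inside the logarithm of the scale-invariant Cassinian metric `τ̃`. -/
noncomputable def cassinianRatio (F : Set X) (x y : X) : ℝ :=
  ⨆ p : F, dist x y / √(dist x p * dist (p : X) y)

lemma log_three_mul_le_log_one_add_two_mul {t : ℝ} (h0 : 0 ≤ t) (h1 : t ≤ 1) :
    log 3 * t ≤ log (1 + 2 * t) := by
  have hconc := strictConcaveOn_log_Ioi.concaveOn.2 (x := 1) (y := 3)
    (by norm_num : (1 : ℝ) ∈ Set.Ioi 0) (by norm_num : (3 : ℝ) ∈ Set.Ioi 0)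
    (by linarith : 0 ≤ 1 - t) h0 (by ring)
  simp only [smul_eq_mul, log_one, mul_zero, zero_add] at hconc
  calc log 3 * t = t * log 3 := mul_comm _ _
    _ ≤ log ((1 - t) * 1 + t * 3) := hconc
    _ = log (1 + 2 * t) := by ring_nf

lemma two_mul_div_add_le_div_sqrt_mul {a b d : ℝ} (ha : 0 < a) (hb : 0 < b) (hd : 0 ≤ d) :
    2 * (d / (a + b)) ≤ d / √(a * b) := by
  have amgm : √(a * b) ≤ (a + b) / 2 :=
    sqrt_le_iff.2 ⟨by positivity, by nlinarith [sq_nonneg (a - b)]⟩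
  calc 2 * (d / (a + b)) = d / ((a + b) / 2) := by field_simp
    _ ≤ d / √(a * b) := div_le_div_of_nonneg_left hd (sqrt_pos.2 (mul_pos ha hb)) amgm

lemma log_three_mul_div_add_dist_le {x y p : X} (hx : 0 < dist x p) (hy : 0 < dist p y) :
    log 3 * (dist x y / (dist x p + dist p y)) ≤
      log (1 + dist x y / √(dist x p * dist p y)) := by
  have ht0 : 0 ≤ dist x y / (dist x p + dist p y) := by positivity
  have ht1 : dist x y / (dist x p + dist p y) ≤ 1 :=
    (div_le_one (by positivity)).2 (dist_triangle x p y)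
  calc _ ≤ log (1 + 2 * (dist x y / (dist x p + dist p y))) :=
        log_three_mul_le_log_one_add_two_mul ht0 ht1
    _ ≤ _ := log_le_log (by positivity)
        (by linarith [two_mul_div_add_le_div_sqrt_mul hx hy (dist_nonneg (x := x) (y := y))])

lemma bddAbove_range_div_sqrt_dist_mul {F : Set X} {x y : X}
    (hx : 0 < infDist x F) (hy : 0 < infDist y F) :
    BddAbove (Set.range fun p : F => dist x y / √(dist x p * dist (p : X) y)) := by
  refine ⟨dist x y / √(infDist x F * infDist y F), ?_⟩
  rintro _ ⟨⟨p, hp⟩, rfl⟩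
  have hxp : infDist x F ≤ dist x p := infDist_le_dist_of_mem hp
  have hyp : infDist y F ≤ dist p y := dist_comm y p ▸ infDist_le_dist_of_mem hp
  exact div_le_div_of_nonneg_left dist_nonneg (sqrt_pos.2 (mul_pos hx hy))
    (sqrt_le_sqrt (mul_le_mul hxp hyp hy.le (hx.trans_le hxp).le))

theorem log_three_mul_triangularRatio_le {F : Set X} (hF : IsClosed F) {x y : X}
    (hx : x ∉ F) (hy : y ∉ F) :
    log 3 * triangularRatio F x y ≤ log (1 + cassinianRatio F x y) := by
  have hcass : 0 ≤ cassinianRatio F x y := iSup_nonneg fun _ => by positivity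
  rw [triangularRatio, mul_iSup_of_nonneg (log_nonneg (by norm_num))]
  refine Real.iSup_le (fun ⟨p, hp⟩ => ?_) (log_nonneg (by linarith))
  have hxF := (hF.notMem_iff_infDist_pos ⟨p, hp⟩).1 hx
  have hyF := (hF.notMem_iff_infDist_pos ⟨p, hp⟩).1 hy
  have hxp : 0 < dist x p := hxF.trans_le (infDist_le_dist_of_mem hp)
  have hyp : 0 < dist p y := hyF.trans_le (dist_comm y p ▸ infDist_le_dist_of_mem hp)
  refine (log_three_mul_div_add_dist_le hxp hyp).trans (log_le_log (by positivity) ?_)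
  gcongr
  exact le_ciSup (bddAbove_range_div_sqrt_dist_mul hxF hyF) ⟨p, hp⟩

lemma triangularRatio_singleton (c x y : X) :
    triangularRatio {c} x y = dist x y / (dist x c + dist c y) :=
  ciSup_unique (ι := ({c} : Set X))

lemma cassinianRatio_singleton (c x y : X) :
    cassinianRatio {c} x y = dist x y / √(dist x c * dist c y) :=
  ciSup_unique (ι := ({c} : Set X))

end RatioSup

section Antipodal

variable {E : Type*} [NormedAddCommGroup E] [NormedSpace ℝ E] {x : E}

lemma dist_self_neg (x : E) : dist x (-x) = 2 * ‖x‖ := by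
  rw [dist_eq_norm, sub_neg_eq_add, ← two_smul ℝ, norm_smul, Real.norm_two]

lemma triangularRatio_zero_neg (hx : x ≠ 0) : triangularRatio {0} x (-x) = 1 := by
  have : ‖x‖ ≠ 0 := norm_ne_zero_iff.2 hx
  rw [triangularRatio_singleton, dist_self_neg, dist_zero_right, dist_zero_left, norm_neg]
  field_simp
  ring

lemma cassinianRatio_zero_neg (hx : x ≠ 0) : cassinianRatio {0} x (-x) = 2 := by
  have : ‖x‖ ≠ 0 := norm_ne_zero_iff.2 hx
  rw [cassinianRatio_singleton, dist_self_neg, dist_zero_right, dist_zero_left, norm_neg,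
    sqrt_mul_self (norm_nonneg x)]
  field_simp

end Antipodal

theorem stmt17_general {n : ℕ} (D : Set (EuclideanSpace ℝ (Fin n)))
    (hDopen : IsOpen D)
    (tau s : _)
    (htau : tau = fun x y => Real.log (1 + ⨆ p : frontier D,
      dist x y / Real.sqrt (dist x (p : EuclideanSpace ℝ (Fin n)) * dist (p : EuclideanSpace ℝ (Fin n)) y)))
    (hs : s = fun x y => ⨆ p : frontier D,
      dist x y / (dist x (p : EuclideanSpace ℝ (Fin n)) + dist (p : EuclideanSpace ℝ (Fin n)) y))
    (x y : EuclideanSpace ℝ (Fin n)) (hx : x ∈ D) (hy : y ∈ D) :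
    Real.log 3 * s x y ≤ tau x y ∧
    (D = {(0 : EuclideanSpace ℝ (Fin n))}ᶜ → y = -x → x ≠ 0 →
      tau x y = Real.log 3 * s x y) := by
  subst htau hs
  have notMem_frontier {z} (hz : z ∈ D) : z ∉ frontier D := fun h =>
    (hDopen.frontier_eq ▸ h).2 hz
  refine ⟨log_three_mul_triangularRatio_le isClosed_frontier (notMem_frontier hx)
    (notMem_frontier hy), ?_⟩
  rintro rfl rfl hx0
  have : Nontrivial (EuclideanSpace ℝ (Fin n)) := ⟨⟨x, 0, hx0⟩⟩
  have hfrontier : frontier ({0}ᶜ : Set (EuclideanSpace ℝ (Fin n))) = {0} := by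
    rw [frontier_compl, isClosed_singleton.frontier_eq, interior_singleton, Set.sdiff_empty]
  show log (1 + cassinianRatio _ x (-x)) = log 3 * triangularRatio _ x (-x)
  rw [hfrontier, cassinianRatio_zero_neg hx0, triangularRatio_zero_neg hx0]
  norm_num

/-- For any proper subdomain `D ⊊ ℝⁿ` and `x, y ∈ D`, the scale-invariant Cassinian
metric `τ̃_D(x,y) = log(1 + sup_{p ∈ ∂D} |x−y|/√(|x−p||p−y|))` and the triangular
ratio metric `s_D(x,y) = sup_{p ∈ ∂D} |x−y|/(|x−p|+|p−y|)` satisfy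
`τ̃_D(x,y) ≥ (log 3)·s_D(x,y)`, with equality in `D = ℝⁿ∖{0}` at `y = −x`. -/
theorem stmt17 {n : ℕ} (D : Set (EuclideanSpace ℝ (Fin n)))
    (hDopen : IsOpen D) (hDconn : IsConnected D) (hDproper : D ≠ Set.univ)
    (tau s : _)
    (htau : tau = fun x y => Real.log (1 + ⨆ p : frontier D,
      dist x y / Real.sqrt (dist x (p : EuclideanSpace ℝ (Fin n)) * dist (p : EuclideanSpace ℝ (Fin n)) y)))
    (hs : s = fun x y => ⨆ p : frontier D,
      dist x y / (dist x (p : EuclideanSpace ℝ (Fin n)) + dist (p : EuclideanSpace ℝ (Fin n)) y))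
    (x y : EuclideanSpace ℝ (Fin n)) (hx : x ∈ D) (hy : y ∈ D) :
    Real.log 3 * s x y ≤ tau x y ∧
    (D = {(0 : EuclideanSpace ℝ (Fin n))}ᶜ → y = -x → x ≠ 0 →
      tau x y = Real.log 3 * s x y) :=
  stmt17_general D hDopen tau s htau hs x y hx hy
end
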